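/- arXiv:math/0611535 — 8 statements merged into one kernel-verified Lean document; each statement's English description precedes it below -/
import Mathlib

section
/- Let p, q ∈ Z[T] satisfy p(T²) = T^{deg p} · q(T + T^{-1}) with 2·deg q = 2·deg p (i.e., p(T²) = q*(T)). Then the root set of q is symmetric about 0: if λ is a root of q, so is −λ. -/
open Polynomial

/-- If `p(T²) = q*(T) = T^(deg q) q(T + T⁻¹)` with `deg q = deg p`, then the root set
of `q` is symmetric about `0`. -/
theorem stmt7 (p q : Polynomial ℤ)
    (hdeg : q.natDegree = p.natDegree)
    (hpq : ∀ z : ℂ, z ≠ 0 →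
      (p.map (Int.castRingHom ℂ)).eval (z ^ 2) =
        z ^ q.natDegree * (q.map (Int.castRingHom ℂ)).eval (z + z⁻¹)) :
    ∀ lam : ℂ, (q.map (Int.castRingHom ℂ)).IsRoot lam →
      (q.map (Int.castRingHom ℂ)).IsRoot (-lam) := by
  intro lam hlam
  -- solve z + z⁻¹ = lam
  obtain ⟨z, hz⟩ := Complex.exists_root (f := X ^ 2 - C lam * X + 1) (by
    have h1 : (X ^ 2 - C lam * X + 1 : ℂ[X]).natDegree = 2 := by
      compute_degree!
    have : (X ^ 2 - C lam * X + 1 : ℂ[X]) ≠ 0 := by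
      intro h; simp [h] at h1
    rw [degree_eq_natDegree this, h1]; norm_num)
  have hz' : z ^ 2 - lam * z + 1 = 0 := by simpa [IsRoot] using hz
  have hz0 : z ≠ 0 := by intro h; simp [h] at hz'
  have hsum : z + z⁻¹ = lam := by
    field_simp
    linear_combination hz'
  have h1 := hpq z hz0
  rw [hsum, hlam.eq_zero, mul_zero] at h1
  have h2 := hpq (-z) (neg_ne_zero.mpr hz0)
  have hneg : -z + (-z)⁻¹ = -lam := by
    rw [inv_neg, ← hsum]; ring
  rw [hneg, neg_sq, h1] at h2
  rcases mul_eq_zero.mp h2.symm with h | h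
  · exact absurd h (pow_ne_zero _ (neg_ne_zero.mpr hz0))
  · exact h
end

section
/- Let p, q ∈ Z[T] with p(T²) = q*(T). Then all roots of p lie in S¹ ∪ R⁺ (the unit circle union the nonnegative reals) if and only if all roots of q are real. -/
open Polynomial

/-- If `z + z⁻¹` is real then `z²` is on the unit circle or in `ℝ⁺`. -/
lemma aux1 (z : ℂ) (hz : z ≠ 0) (h : (z + z⁻¹).im = 0) :
    ‖z ^ 2‖ = 1 ∨ ((z ^ 2).im = 0 ∧ 0 ≤ (z ^ 2).re) := by
  have hns : Complex.normSq z ≠ 0 := (Complex.normSq_pos.mpr hz).ne'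
  rw [Complex.add_im, Complex.inv_im] at h
  have h' : z.im * (Complex.normSq z - 1) = 0 := by
    field_simp at h
    linear_combination h
  rcases mul_eq_zero.mp h' with him | hn
  · right
    refine ⟨?_, ?_⟩
    · rw [pow_two, Complex.mul_im, him]; ring
    · rw [pow_two, Complex.mul_re, him]; nlinarith [sq_nonneg z.re]
  · left
    have hn1 : Complex.normSq z = 1 := by linarith
    rw [norm_pow, Complex.norm_def, hn1, Real.sqrt_one, one_pow]

/-- If `z²` is on the unit circle or in `ℝ⁺` then `z + z⁻¹` is real. -/
lemma aux2 (z : ℂ) (hz : z ≠ 0)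
    (h : ‖z ^ 2‖ = 1 ∨ ((z ^ 2).im = 0 ∧ 0 ≤ (z ^ 2).re)) :
    (z + z⁻¹).im = 0 := by
  have hns : Complex.normSq z ≠ 0 := (Complex.normSq_pos.mpr hz).ne'
  rw [Complex.add_im, Complex.inv_im]
  rcases h with h | ⟨h1, h2⟩
  · have hn1 : Complex.normSq z = 1 := by
      have ha : ‖z‖ = 1 := by
        rw [norm_pow] at h
        nlinarith [norm_nonneg z]
      rw [← Complex.sq_norm, ha]; norm_num
    rw [hn1]; simp
  · rw [pow_two, Complex.mul_im] at h1
    rw [pow_two, Complex.mul_re] at h2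
    have him : z.im = 0 := by
      rcases mul_eq_zero.mp (by linarith : z.re * z.im = 0) with h | h
      · nlinarith [sq_nonneg z.im]
      · exact h
    rw [him]; ring

/-- Every complex number is `z + z⁻¹` for some nonzero `z`. -/
lemma aux3 (lam : ℂ) : ∃ z : ℂ, z ≠ 0 ∧ z + z⁻¹ = lam := by
  obtain ⟨s, hs⟩ := Complex.isAlgClosed.exists_pow_nat_eq (lam ^ 2 - 4) (by norm_num : 0 < 2)
  have key : ((lam + s) / 2) ^ 2 + 1 = lam * ((lam + s) / 2) := by
    field_simp
    linear_combination hs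
  have hz : (lam + s) / 2 ≠ 0 := by
    intro h0
    rw [h0] at key
    norm_num at key
  refine ⟨(lam + s) / 2, hz, ?_⟩
  have hne : lam + s ≠ 0 := by
    intro h; apply hz; rw [h]; ring
  field_simp
  linear_combination hs

/-- If `p(T²) = q*(T)`, then all roots of `p` lie in `S¹ ∪ ℝ⁺` iff all roots of `q`
are real. -/
theorem stmt9 (p q : Polynomial ℤ)
    (hpq : ∀ z : ℂ, z ≠ 0 →
      (p.map (Int.castRingHom ℂ)).eval (z ^ 2) =
        z ^ q.natDegree * (q.map (Int.castRingHom ℂ)).eval (z + z⁻¹)) :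
    (∀ mu : ℂ, (p.map (Int.castRingHom ℂ)).IsRoot mu →
        ‖mu‖ = 1 ∨ (mu.im = 0 ∧ 0 ≤ mu.re)) ↔
      (∀ lam : ℂ, (q.map (Int.castRingHom ℂ)).IsRoot lam → lam.im = 0) := by
  constructor
  · intro hp lam hlam
    obtain ⟨z, hz, hsum⟩ := aux3 lam
    have hroot : (p.map (Int.castRingHom ℂ)).IsRoot (z ^ 2) := by
      have h0 : (q.map (Int.castRingHom ℂ)).eval lam = 0 := hlam
      unfold IsRoot
      rw [hpq z hz, hsum, h0, mul_zero]
    have := hp _ hroot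
    rw [← hsum]
    exact aux2 z hz this
  · intro hq mu hmu
    by_cases hmu0 : mu = 0
    · right; rw [hmu0]; norm_num
    · obtain ⟨z, hz2⟩ := Complex.isAlgClosed.exists_pow_nat_eq mu (by norm_num : 0 < 2)
      have hz : z ≠ 0 := by
        intro h0; rw [h0] at hz2; simp at hz2; exact hmu0 hz2.symm
      have h0 : z ^ q.natDegree * (q.map (Int.castRingHom ℂ)).eval (z + z⁻¹) = 0 := by
        rw [← hpq z hz, hz2]; exact hmu
      have hqr : (q.map (Int.castRingHom ℂ)).IsRoot (z + z⁻¹) := by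
        rcases mul_eq_zero.mp h0 with h | h
        · exact absurd h (pow_ne_zero _ hz)
        · exact h
      have := hq _ hqr
      rw [← hz2]
      exact aux1 z hz this
end

section
/- Let p, q ∈ Z[T] with p(T²) = q*(T). Then all roots of p lie on the unit circle S¹ if and only if all roots of q lie in the real interval [−2, 2]. -/
open Polynomial

/-- If `p(T²) = q*(T)`, then all roots of `p` lie on the unit circle iff all roots
of `q` lie in the real interval `[-2, 2]`. -/
theorem stmt10 (p q : Polynomial ℤ)
    (hpq : ∀ z : ℂ, z ≠ 0 →
      (p.map (Int.castRingHom ℂ)).eval (z ^ 2) =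
        z ^ q.natDegree * (q.map (Int.castRingHom ℂ)).eval (z + z⁻¹)) :
    (∀ mu : ℂ, (p.map (Int.castRingHom ℂ)).IsRoot mu → ‖mu‖ = 1) ↔
      (∀ lam : ℂ, (q.map (Int.castRingHom ℂ)).IsRoot lam →
        lam.im = 0 ∧ -2 ≤ lam.re ∧ lam.re ≤ 2) := by
  set P := p.map (Int.castRingHom ℂ) with hPdef
  set Q := q.map (Int.castRingHom ℂ) with hQdef
  set n := q.natDegree with hndef
  constructor
  · -- roots of p on circle → roots of q in [-2,2]
    intro hroots lam hlam
    obtain ⟨z, hz⟩ : ∃ z : ℂ, z ^ 2 - lam * z + 1 = 0 := by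
      have hd : (X ^ 2 - C lam * X + 1 : ℂ[X]).degree = 2 := by compute_degree!
      obtain ⟨z, hz⟩ := Complex.exists_root (f := X ^ 2 - C lam * X + 1) (by rw [hd]; norm_num)
      exact ⟨z, by simpa [IsRoot] using hz⟩
    have hz0 : z ≠ 0 := by
      intro h; rw [h] at hz; norm_num at hz
    have hsum : z + z⁻¹ = lam := by
      field_simp
      linear_combination hz
    have h1 : P.eval (z ^ 2) = 0 := by
      rw [hpq z hz0, hsum, hlam.eq_zero, mul_zero]
    have habs : ‖z ^ 2‖ = 1 := hroots _ h1
    have hzabs : ‖z‖ = 1 := by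
      rw [norm_pow] at habs
      nlinarith [norm_nonneg z]
    have hnsq : Complex.normSq z = 1 := by rw [← Complex.sq_norm, hzabs]; norm_num
    have hinv : z⁻¹ = (starRingEnd ℂ) z := by
      have h1 : z * (starRingEnd ℂ) z = 1 := by
        rw [Complex.mul_conj, hnsq]; norm_num
      exact inv_eq_of_mul_eq_one_right h1
    have hlam2 : lam = ((2 * z.re : ℝ) : ℂ) := by
      rw [← hsum, hinv, Complex.add_conj]
    constructor
    · rw [hlam2]; simp
    · have hre : lam.re = 2 * z.re := by rw [hlam2]; simp
      have h1 : |z.re| ≤ 1 := by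
        have := Complex.abs_re_le_norm z
        rwa [hzabs] at this
      rw [hre]
      constructor <;> [skip; skip] <;> cases' abs_le.mp h1 with hl hr <;> linarith
  · -- roots of q in [-2,2] → roots of p on circle
    intro hroots mu hmu
    have hQ0 : Q ≠ 0 := by
      intro h
      have := hroots 3 (by simp [h, IsRoot])
      norm_num at this
    have hq0 : q ≠ 0 := by
      intro h; apply hQ0; rw [hQdef, h, Polynomial.map_zero]
    have hQn : Q.coeff n ≠ 0 := by
      rw [hQdef, Polynomial.coeff_map]
      simp only [Int.castRingHom, eq_intCast, ne_eq, Int.cast_eq_zero]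
      exact fun h => hq0 (Polynomial.leadingCoeff_eq_zero.mp h)
    -- polynomial identity: P.comp (X^2) = B
    set B : ℂ[X] := ∑ k ∈ Finset.range (n + 1),
        C (Q.coeff k) * (X ^ (n - k) * (X ^ 2 + 1) ^ k) with hBdef
    have hB : ∀ z : ℂ, z ≠ 0 → B.eval z = z ^ n * Q.eval (z + z⁻¹) := by
      intro z hz
      have hq : Q.eval (z + z⁻¹) = ∑ k ∈ Finset.range (n + 1), Q.coeff k * (z + z⁻¹) ^ k := by
        apply Polynomial.eval_eq_sum_range'
        exact lt_of_le_of_lt (Polynomial.natDegree_map_le) (Nat.lt_succ_of_le le_rfl)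
      rw [hBdef, Polynomial.eval_finset_sum, hq, Finset.mul_sum]
      apply Finset.sum_congr rfl
      intro k hk
      have hkn : k ≤ n := Nat.lt_succ_iff.mp (Finset.mem_range.mp hk)
      have h1 : (z ^ 2 + 1) = z * (z + z⁻¹) := by field_simp
      have h2 : z ^ (n - k) * z ^ k = z ^ n := by
        rw [← pow_add]; congr 1; omega
      simp only [eval_mul, eval_C, eval_pow, eval_X, eval_add, eval_one]
      rw [h1, mul_pow]
      calc Q.coeff k * (z ^ (n - k) * (z ^ k * (z + z⁻¹) ^ k))
          = (z ^ (n - k) * z ^ k) * (Q.coeff k * (z + z⁻¹) ^ k) := by ring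
        _ = z ^ n * (Q.coeff k * (z + z⁻¹) ^ k) := by rw [h2]
    have hAB : P.comp (X ^ 2) = B := by
      have hzero : ∀ z : ℂ, z ≠ 0 → (P.comp (X ^ 2) - B).eval z = 0 := by
        intro z hz
        rw [eval_sub, eval_comp, eval_pow, eval_X, hB z hz, hpq z hz]
        ring
      have hinf : Set.Infinite {z : ℂ | IsRoot (P.comp (X ^ 2) - B) z} := by
        apply Set.Infinite.mono (s := {(0 : ℂ)}ᶜ)
        · exact fun z hz => hzero z hz
        · exact (Set.finite_singleton 0).infinite_compl
      have := Polynomial.eq_zero_of_infinite_isRoot _ hinf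
      linear_combination (norm := ring_nf) this
    have hP0 : P.eval 0 = Q.coeff n := by
      have h1 : (P.comp (X ^ 2)).eval 0 = P.eval 0 := by
        rw [eval_comp]; norm_num
      rw [← h1, hAB, hBdef, Polynomial.eval_finset_sum]
      rw [Finset.sum_eq_single n]
      · simp
      · intro k hk hkn
        have hk' : n - k ≠ 0 := by
          have := Finset.mem_range.mp hk
          omega
        simp [zero_pow hk']
      · intro h; exact absurd (Finset.self_mem_range_succ n) h
    have hmu0 : mu ≠ 0 := by
      intro h
      rw [h] at hmu
      exact hQn (by rw [← hP0]; exact hmu)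
    obtain ⟨z, hz⟩ : ∃ z : ℂ, z ^ 2 = mu := by
      have hd : (X ^ 2 - C mu : ℂ[X]).degree = 2 := by compute_degree!
      obtain ⟨z, hz⟩ := Complex.exists_root (f := X ^ 2 - C mu) (by rw [hd]; norm_num)
      refine ⟨z, ?_⟩
      have h := hz
      simp only [IsRoot, eval_sub, eval_pow, eval_X, eval_C] at h
      linear_combination h
    have hz0 : z ≠ 0 := by
      intro h; rw [h] at hz; simp at hz; exact hmu0 hz.symm
    set lam := z + z⁻¹ with hlamdef
    have hQlam : Q.eval lam = 0 := by
      have h := hpq z hz0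
      rw [hz] at h
      rw [show P.eval mu = 0 from hmu] at h
      have hzn : z ^ n ≠ 0 := pow_ne_zero _ hz0
      exact (mul_eq_zero.mp h.symm).resolve_left hzn
    obtain ⟨him, hle, hge⟩ := hroots lam hQlam
    -- z^2 - lam*z + 1 = 0
    have hzeq : z ^ 2 - lam * z + 1 = 0 := by
      rw [hlamdef]
      have h := mul_inv_cancel₀ hz0
      linear_combination -h
    have hlamconj : (starRingEnd ℂ) lam = lam := Complex.conj_eq_iff_im.mpr him
    have hc : ((starRingEnd ℂ) z) ^ 2 - lam * ((starRingEnd ℂ) z) + 1 = 0 := by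
      have := congrArg (starRingEnd ℂ) hzeq
      simpa [map_pow, hlamconj] using this
    have hfac : ((starRingEnd ℂ) z - z) * ((starRingEnd ℂ) z + z - lam) = 0 := by
      linear_combination hc - hzeq
    have habsz : ‖z‖ = 1 := by
      rcases mul_eq_zero.mp hfac with h | h
      · -- conj z = z : z is real
        have hzre : ((z.re : ℝ) : ℂ) = z := Complex.conj_eq_iff_re.mp (by linear_combination h)
        have hlamre : ((lam.re : ℝ) : ℂ) = lam := by
          exact Complex.conj_eq_iff_re.mp hlamconj
        set x := z.re with hx
        set r := lam.re with hr
        have hreal : x ^ 2 - r * x + 1 = 0 := by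
          have : ((x : ℂ)) ^ 2 - (r : ℂ) * (x : ℂ) + 1 = 0 := by
            rw [hzre, hlamre]; exact hzeq
          exact_mod_cast this
        have h4 : (x ^ 2 - 1) ^ 2 = (r ^ 2 - 4) * x ^ 2 := by
          linear_combination (x ^ 2 + 1 + r * x) * hreal
        have hr4 : r ^ 2 - 4 ≤ 0 := by nlinarith
        have h5 : (x ^ 2 - 1) ^ 2 ≤ 0 := by nlinarith [sq_nonneg x]
        have hx2 : x ^ 2 = 1 := by nlinarith [sq_nonneg (x ^ 2 - 1)]
        rw [← hzre]
        simp only [Complex.norm_real, Real.norm_eq_abs]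
        nlinarith [abs_nonneg x, sq_abs x]
      · -- conj z = lam - z : z * conj z = 1
        have hmc : z * (starRingEnd ℂ) z = 1 := by
          linear_combination z * h + mul_inv_cancel₀ hz0
        have hns : Complex.normSq z = 1 := by
          have := Complex.mul_conj z
          rw [hmc] at this
          exact_mod_cast this.symm
        rw [Complex.norm_def, hns, Real.sqrt_one]
    rw [← hz, norm_pow, habsz, one_pow]
end

section
/- Let p, q ∈ Z[T] with p(T²) = q*(T). Then all roots of p lie in S¹ \ {1} if and only if all roots of q lie in the open interval (−2, 2). -/
open Polynomial

/-- If `p(T²) = q*(T)`, then all roots of `p` lie in `S¹ \ {1}` iff all roots of `q`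
lie in the open interval `(-2, 2)`. -/
theorem stmt11 (p q : Polynomial ℤ)
    (hpq : ∀ z : ℂ, z ≠ 0 →
      (p.map (Int.castRingHom ℂ)).eval (z ^ 2) =
        z ^ q.natDegree * (q.map (Int.castRingHom ℂ)).eval (z + z⁻¹)) :
    (∀ mu : ℂ, (p.map (Int.castRingHom ℂ)).IsRoot mu →
        ‖mu‖ = 1 ∧ mu ≠ 1) ↔
      (∀ lam : ℂ, (q.map (Int.castRingHom ℂ)).IsRoot lam →
        lam.im = 0 ∧ -2 < lam.re ∧ lam.re < 2) := by
  set pc := p.map (Int.castRingHom ℂ) with hpc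
  set qc := q.map (Int.castRingHom ℂ) with hqc
  set n := q.natDegree with hn
  constructor
  · -- forward
    intro H lam hlam
    obtain ⟨s, hs⟩ := IsAlgClosed.exists_pow_nat_eq (k := ℂ) (lam ^ 2 - 4) (n := 2) two_pos
    set z := (lam + s) / 2 with hzdef
    have hz2 : z ^ 2 - lam * z + 1 = 0 := by
      rw [hzdef]; linear_combination hs / 4
    have hz0 : z ≠ 0 := by
      intro h; rw [h] at hz2; norm_num at hz2
    have hlz : z + z⁻¹ = lam := by
      have h1 : z * z⁻¹ = 1 := mul_inv_cancel₀ hz0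
      have h2 : z * (z + z⁻¹ - lam) = 0 := by
        rw [mul_sub, mul_add, h1]
        linear_combination hz2
      have h3 := (mul_eq_zero.mp h2).resolve_left hz0
      exact sub_eq_zero.mp h3
    have hroot : pc.IsRoot (z ^ 2) := by
      have h := hpq z hz0
      rw [hlz] at h
      simp only [Polynomial.IsRoot] at hlam ⊢
      rw [hlam, mul_zero] at h
      exact h
    obtain ⟨habs, hne1⟩ := H _ hroot
    have habsz : ‖z‖ = 1 := by
      have h1 : ‖z‖ ^ 2 = 1 := by rw [← norm_pow]; exact habs
      nlinarith [norm_nonneg z]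
    have hinv : z⁻¹ = starRingEnd ℂ z := by
      rw [Complex.inv_def, ← Complex.sq_norm, habsz]
      simp
    have hre2 : lam = z + starRingEnd ℂ z := by rw [← hinv, hlz]
    have him : lam.im = 0 := by rw [hre2]; simp
    have hlre : lam.re = 2 * z.re := by rw [hre2]; simp; ring
    have hnz : z.re ^ 2 + z.im ^ 2 = 1 := by
      have h := Complex.sq_norm z
      rw [habsz, Complex.normSq_apply] at h
      nlinarith
    have hne_one : z.re ≠ 1 := by
      intro h
      have him0 : z.im = 0 := by nlinarith
      apply hne1
      have : z = 1 := Complex.ext (by simp [h]) (by simp [him0])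
      rw [this]; norm_num
    have hne_negone : z.re ≠ -1 := by
      intro h
      have him0 : z.im = 0 := by nlinarith
      apply hne1
      have : z = -1 := Complex.ext (by simp [h]) (by simp [him0])
      rw [this]; norm_num
    have h1 : z.re ≤ 1 := by nlinarith
    have h2 : -1 ≤ z.re := by nlinarith
    refine ⟨him, ?_, ?_⟩
    · rw [hlre]
      have := lt_of_le_of_ne h2 (Ne.symm hne_negone)
      linarith
    · rw [hlre]
      have := lt_of_le_of_ne h1 hne_one
      linarith
  · -- backward
    intro H
    -- polynomial identity: pc.comp (X^2) = F
    set F : Polynomial ℂ :=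
      ∑ i ∈ Finset.range (n + 1), C (qc.coeff i) * (X ^ 2 + 1) ^ i * X ^ (n - i) with hFdef
    have hqdeg : qc.natDegree < n + 1 :=
      Nat.lt_succ_of_le Polynomial.natDegree_map_le
    have hFeval : ∀ z : ℂ, z ≠ 0 → F.eval z = z ^ n * qc.eval (z + z⁻¹) := by
      intro z hz
      rw [Polynomial.eval_eq_sum_range' hqdeg, Finset.mul_sum, hFdef]
      rw [Polynomial.eval_finset_sum]
      apply Finset.sum_congr rfl
      intro i hi
      have hi' : i ≤ n := Nat.lt_succ_iff.mp (Finset.mem_range.mp hi)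
      simp only [eval_mul, eval_pow, eval_add, eval_C, eval_X, eval_one]
      have h1 : (z ^ 2 + 1) ^ i = (z + z⁻¹) ^ i * z ^ i := by
        rw [← mul_pow]
        congr 1
        field_simp
      rw [h1]
      have h2 : z ^ i * z ^ (n - i) = z ^ n := by
        rw [← pow_add, Nat.add_sub_cancel' hi']
      calc qc.coeff i * ((z + z⁻¹) ^ i * z ^ i) * z ^ (n - i)
          = qc.coeff i * (z + z⁻¹) ^ i * (z ^ i * z ^ (n - i)) := by ring
        _ = z ^ n * (qc.coeff i * (z + z⁻¹) ^ i) := by rw [h2]; ring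
    have hPF : pc.comp (X ^ 2) = F := by
      have hsub : pc.comp (X ^ 2) - F = 0 := by
        apply Polynomial.eq_zero_of_infinite_isRoot
        apply Set.Infinite.mono (s := {z : ℂ | z ≠ 0})
        · intro z hz
          simp only [Set.mem_setOf_eq, Polynomial.IsRoot, Polynomial.eval_sub,
            Polynomial.eval_comp, Polynomial.eval_pow, Polynomial.eval_X]
          rw [hFeval z hz, hpq z hz]
          ring
        · exact Set.Finite.infinite_compl (Set.finite_singleton 0)
      exact sub_eq_zero.mp hsub
    have h0 : pc.eval 0 = qc.coeff n := by
      have h := congrArg (Polynomial.eval (0 : ℂ)) hPF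
      rw [Polynomial.eval_comp] at h
      simp only [Polynomial.eval_pow, Polynomial.eval_X] at h
      norm_num at h
      rw [h, hFdef, Polynomial.eval_finset_sum]
      rw [Finset.sum_eq_single n]
      · simp
      · intro i hi hne
        have hi' : i < n := lt_of_le_of_ne (Nat.lt_succ_iff.mp (Finset.mem_range.mp hi)) hne
        have : n - i ≠ 0 := Nat.sub_ne_zero_of_lt hi'
        simp [zero_pow this]
      · intro h'; exact absurd (Finset.self_mem_range_succ n) h'
    have hqc_ne : qc ≠ 0 := by
      intro h
      have h3 : qc.IsRoot 3 := by rw [h]; simp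
      have := (H 3 h3).2.2
      norm_num at this
    have hq_ne : q ≠ 0 := by
      intro h; apply hqc_ne; rw [hqc, h]; simp
    have hcoeff : qc.coeff n ≠ 0 := by
      rw [hqc, Polynomial.coeff_map]
      simp only [Int.castRingHom, eq_intCast, ne_eq, Int.cast_eq_zero]
      exact Polynomial.leadingCoeff_ne_zero.mpr hq_ne
    have h0ne : pc.eval 0 ≠ 0 := by rw [h0]; exact hcoeff
    intro mu hmu
    have hmu0 : mu ≠ 0 := by
      intro h; rw [h] at hmu; exact h0ne hmu
    obtain ⟨z, hz2⟩ := IsAlgClosed.exists_pow_nat_eq (k := ℂ) mu (n := 2) two_pos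
    have hz0 : z ≠ 0 := by
      intro h; apply hmu0; rw [← hz2, h]; ring
    have hqroot : qc.eval (z + z⁻¹) = 0 := by
      have h := hpq z hz0
      rw [hz2] at h
      rw [hmu] at h
      rcases mul_eq_zero.mp h.symm with h' | h'
      · exact absurd h' (pow_ne_zero n hz0)
      · exact h'
    obtain ⟨him, hlo, hhi⟩ := H _ hqroot
    -- show |z| = 1
    have hns : Complex.normSq z ≠ 0 := (Complex.normSq_pos.mpr hz0).ne'
    have himc : (z + z⁻¹).im = z.im - z.im / Complex.normSq z := by
      simp [Complex.add_im, Complex.inv_im]; ring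
    have hkey : z.im * (Complex.normSq z - 1) = 0 := by
      have h := him
      rw [himc] at h
      field_simp at h
      linarith [h]
    have habs : Complex.normSq z = 1 := by
      rcases mul_eq_zero.mp hkey with hb | hb
      · -- z real, contradiction
        exfalso
        have ha0 : z.re ≠ 0 := by
          intro h
          apply hz0
          exact Complex.ext h hb
        have hnsq : Complex.normSq z = z.re ^ 2 := by
          rw [Complex.normSq_apply, hb]; ring
        have hrec : (z + z⁻¹).re = z.re + 1 / z.re := by
          rw [Complex.add_re, Complex.inv_re, hnsq]
          field_simp
        rw [hrec] at hlo hhi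
        rcases lt_or_gt_of_ne ha0 with ha | ha
        · have : (z.re + 1) ^ 2 / z.re ≤ 0 :=
            div_nonpos_iff.mpr (Or.inl ⟨sq_nonneg _, ha.le⟩)
          have heq : z.re + 1 / z.re + 2 = (z.re + 1) ^ 2 / z.re := by
            field_simp; ring
          linarith
        · have : 0 ≤ (z.re - 1) ^ 2 / z.re :=
            div_nonneg (sq_nonneg _) ha.le
          have heq : z.re + 1 / z.re - 2 = (z.re - 1) ^ 2 / z.re := by
            field_simp; ring
          linarith
      · linarith [hb]
    have habs_mu : ‖mu‖ = 1 := by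
      rw [← hz2, norm_pow, Complex.sq_norm, habs]
    refine ⟨habs_mu, ?_⟩
    intro h1
    have hz21 : z ^ 2 = 1 := by rw [hz2, h1]
    have : (z - 1) * (z + 1) = 0 := by linear_combination hz21
    rcases mul_eq_zero.mp this with h' | h'
    · have hz1 : z = 1 := by linear_combination h'
      rw [hz1] at hhi
      norm_num at hhi
    · have hz1 : z = -1 := by linear_combination h'
      rw [hz1] at hlo
      norm_num at hlo
end

section
/- If M is a symmetric n×n integer matrix and p ∈ Z[T] satisfies p(T²) = χ_M*(T) where χ_M is the characteristic polynomial of M, then every root of p lies in S¹ ∪ R⁺. -/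
open Polynomial
open scoped ComplexOrder

/-- Roots of the characteristic polynomial of a Hermitian complex matrix are real. -/
lemma aux_charpoly_root_real {n : ℕ} (A : Matrix (Fin n) (Fin n) ℂ)
    (hA : A.IsHermitian) (μ : ℂ) (h : A.charpoly.IsRoot μ) :
    (starRingEnd ℂ) μ = μ := by
  -- det (diagonal μ - A) = 0
  have hmap : (Matrix.charmatrix A).map (Polynomial.eval μ) =
      Matrix.diagonal (fun _ : Fin n => μ) - A := by
    ext i j
    by_cases hij : i = j
    · subst hij
      simp [Matrix.charmatrix_apply_eq]
    · simp [Matrix.charmatrix_apply_ne _ _ _ hij, Matrix.diagonal_apply_ne _ hij]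
  have hev : Polynomial.eval μ A.charmatrix.det = 0 := by
    have := h; rwa [Polynomial.IsRoot, Matrix.charpoly] at this
  have hdet : (Matrix.diagonal (fun _ : Fin n => μ) - A).det = 0 := by
    rw [← hmap]
    have h3 := RingHom.map_det (Polynomial.evalRingHom μ) A.charmatrix
    rw [RingHom.mapMatrix_apply] at h3
    simpa [Polynomial.coe_evalRingHom, hev] using h3.symm
  obtain ⟨v, hv0, hv⟩ := (Matrix.exists_mulVec_eq_zero_iff).2 hdet
  have hAv : A.mulVec v = μ • v := by
    have h1 := hv
    rw [Matrix.sub_mulVec] at h1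
    have h2 : (Matrix.diagonal (fun _ : Fin n => μ)).mulVec v = μ • v := by
      ext i; simp [Matrix.mulVec_diagonal]
    rw [h2] at h1
    exact (sub_eq_zero.mp h1).symm
  set c : ℂ := dotProduct (star v) v with hc
  have hcne : c ≠ 0 := fun hcz => hv0 (dotProduct_star_self_eq_zero.mp hcz)
  have hcstar : star c = c := by
    rw [hc, ← Matrix.star_dotProduct_star]
    simp [dotProduct_comm]
  have h1 : dotProduct (star v) (A.mulVec v) = μ * c := by
    rw [hAv, dotProduct_smul, smul_eq_mul]
  have h2 : star (dotProduct (star v) (A.mulVec v)) =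
      dotProduct (star v) (A.mulVec v) := by
    rw [← Matrix.star_dotProduct]
    rw [Matrix.star_mulVec, hA.eq]
    rw [← Matrix.dotProduct_mulVec]
  rw [h1] at h2
  have : (starRingEnd ℂ) μ * c = μ * c := by
    calc (starRingEnd ℂ) μ * c = star μ * star c := by rw [hcstar]; rfl
    _ = star (μ * c) := by rw [star_mul']
    _ = μ * c := h2
  exact mul_right_cancel₀ hcne this

/-- If `p` is graphically represented, i.e. `p(T²) = χ_M*(T)` for a symmetric integer
matrix `M`, then every complex root of `p` lies in `S¹ ∪ ℝ⁺`. -/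
theorem stmt14 (n : ℕ) (M : Matrix (Fin n) (Fin n) ℤ) (hM : M.IsSymm)
    (p : Polynomial ℤ)
    (hpq : ∀ z : ℂ, z ≠ 0 →
      (p.map (Int.castRingHom ℂ)).eval (z ^ 2) =
        z ^ n * ((M.charpoly).map (Int.castRingHom ℂ)).eval (z + z⁻¹)) :
    ∀ mu : ℂ, (p.map (Int.castRingHom ℂ)).IsRoot mu →
      ‖mu‖ = 1 ∨ (mu.im = 0 ∧ 0 ≤ mu.re) := by
  intro mu hmu
  by_cases hmu0 : mu = 0
  · right; simp [hmu0]
  -- choose a square root z of mu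
  obtain ⟨z, hz⟩ := IsAlgClosed.exists_pow_nat_eq mu (n := 2) (by norm_num)
  have hz0 : z ≠ 0 := by
    intro h; apply hmu0; rw [← hz, h]; ring
  -- the complexified matrix
  set A : Matrix (Fin n) (Fin n) ℂ := M.map (Int.castRingHom ℂ) with hA
  have hAH : A.IsHermitian := by
    ext i j
    have hMs : M j i = M i j := by
      exact hM.apply i j
    simp [hA, Matrix.conjTranspose_apply, Matrix.map_apply, hMs]
  -- z + z⁻¹ is a root of the charpoly of A
  have hroot : A.charpoly.IsRoot (z + z⁻¹) := by
    have h := hpq z hz0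
    rw [hz] at h
    rw [hmu] at h
    have hzn : (z : ℂ) ^ n ≠ 0 := pow_ne_zero _ hz0
    have : ((M.charpoly).map (Int.castRingHom ℂ)).eval (z + z⁻¹) = 0 := by
      rcases mul_eq_zero.mp h.symm with h' | h'
      · exact absurd h' hzn
      · exact h'
    rw [← Matrix.charpoly_map] at this
    exact this
  -- so z + z⁻¹ is real
  have hreal : (starRingEnd ℂ) (z + z⁻¹) = z + z⁻¹ :=
    aux_charpoly_root_real A hAH _ hroot
  -- hence z is real, or |z| = 1
  set w : ℂ := (starRingEnd ℂ) z with hw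
  have hw0 : w ≠ 0 := by simpa [hw] using hz0
  have hkey : (z - w) * (z * w - 1) = 0 := by
    have h' : w + w⁻¹ = z + z⁻¹ := by
      rw [hw, ← map_inv₀, ← map_add]; exact hreal
    field_simp at h'
    linear_combination -h'
  rcases mul_eq_zero.mp hkey with h' | h'
  · -- z real : mu = z^2 is nonneg real
    right
    have hzw : z = w := sub_eq_zero.mp h'
    have hzim : z.im = 0 := by
      have := congrArg Complex.im hzw
      simp [hw, Complex.conj_im] at this
      linarith
    constructor
    · rw [← hz]
      simp [pow_two, Complex.mul_im, hzim]
    · rw [← hz]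
      simp only [pow_two, Complex.mul_re, hzim, mul_zero, sub_zero]
      exact mul_self_nonneg _
  · -- |z| = 1 : |mu| = 1
    left
    have hzw : z * w = 1 := by linear_combination h'
    have habs : ‖z‖ ^ 2 = 1 := by
      have := congrArg (‖·‖) hzw
      rw [norm_mul, hw, Complex.norm_conj, norm_one] at this
      rw [pow_two]; exact this
    have : ‖z‖ = 1 := by
      nlinarith [norm_nonneg z]
    rw [← hz, norm_pow, this, one_pow]
end

section
/- The characteristic polynomial of the adjacency matrix of the path graph A_n on n vertices equals the normalized Chebyshev polynomial u_n of the second kind, where u_0 = 1, u_1 = T, u_{n+1} = T u_n − u_{n−1}. -/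
open Polynomial Matrix

/-- Normalized Chebyshev polynomials of the second kind. -/
noncomputable def cheb : ℕ → Polynomial ℤ
  | 0 => 1
  | 1 => Polynomial.X
  | (n + 2) => Polynomial.X * cheb (n + 1) - cheb n

noncomputable def A (n : ℕ) : Matrix (Fin n) (Fin n) (Polynomial ℤ) :=
  Matrix.of fun i j => if (i:ℕ) = j then X else
    if (i:ℕ) + 1 = (j:ℕ) ∨ (j:ℕ) + 1 = (i:ℕ) then -1 else 0

lemma detA : ∀ n, (A n).det = cheb n := by
  intro n
  induction n using Nat.strong_induction_on with
  | _ n ih =>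
    match n with
    | 0 => simp [A, cheb]
    | 1 => simp [A, cheb, det_fin_one]
    | (n+2) =>
      rw [det_succ_row_zero, Fin.sum_univ_succ, Fin.sum_univ_succ]
      simp only [Fin.succ_zero_eq_one]
      have h0 : (A (n+2)) 0 0 = X := by simp [A]
      have h1 : (A (n+2)) 0 1 = -1 := by simp [A]
      have hrest : ∀ j : Fin n, (A (n+2)) 0 j.succ.succ = 0 := by
        intro j; simp [A, Fin.ext_iff]
      have hm0 : (A (n+2)).submatrix Fin.succ (Fin.succAbove 0) = A (n+1) := by
        ext i j
        simp [A, Fin.succAbove, Fin.ext_iff, Fin.lt_def]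
      have hm1 : ((A (n+2)).submatrix Fin.succ (Fin.succAbove 1)).det = - (A n).det := by
        rw [det_succ_column_zero, Fin.sum_univ_succ]
        have e0 : (A (n+2)).submatrix Fin.succ (Fin.succAbove 1) 0 0 = -1 := by
          simp [A, Fin.succAbove, Fin.ext_iff, Fin.lt_def]
        have erest : ∀ i : Fin n,
            (A (n+2)).submatrix Fin.succ (Fin.succAbove 1) i.succ 0 = 0 := by
          intro i; simp [A, Fin.succAbove, Fin.ext_iff, Fin.lt_def]
        have em : ((A (n+2)).submatrix Fin.succ (Fin.succAbove 1)).submatrix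
            (Fin.succAbove 0) Fin.succ = A n := by
          ext i j
          simp only [A, Matrix.submatrix_apply, Matrix.of_apply, Fin.succAbove, Fin.ext_iff,
            Fin.lt_def, Fin.val_succ, Fin.coe_castSucc, Fin.val_zero, Fin.val_one]
          norm_num
        rw [e0, em]
        simp only [erest, mul_zero, zero_mul, Finset.sum_const_zero, add_zero]
        simp
      rw [h0, h1, hm0, hm1]
      simp only [hrest, mul_zero, zero_mul, Finset.sum_const_zero, add_zero]
      rw [ih (n+1) (by omega), ih n (by omega)]
      show _ = cheb (n+2)
      rw [cheb]
      simp only [Fin.val_zero, Fin.val_one, pow_zero, pow_one, Nat.add_comm 1 n]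
      ring


/-- The characteristic polynomial of the adjacency matrix of the path graph `𝔸ₙ`
on `n` vertices is the `n`-th normalized Chebyshev polynomial `uₙ`. -/
theorem stmt16 (n : ℕ) :
    (Matrix.of fun i j : Fin n =>
        if (i : ℕ) + 1 = (j : ℕ) ∨ (j : ℕ) + 1 = (i : ℕ) then (1 : ℤ) else 0).charpoly
      = cheb n := by

  rw [Matrix.charpoly]
  have h : charmatrix (Matrix.of fun i j : Fin n =>
      if (i : ℕ) + 1 = (j : ℕ) ∨ (j : ℕ) + 1 = (i : ℕ) then (1 : ℤ) else 0) = A n := by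
    ext i j
    by_cases hij : i = j
    · subst hij
      rw [charmatrix_apply_eq]
      simp [A]
    · rw [charmatrix_apply_ne _ _ _ hij]
      have : (i : ℕ) ≠ j := fun h => hij (Fin.ext h)
      simp only [A, Matrix.of_apply, if_neg this]
      split_ifs <;> simp
  rw [h, detA]
end

section
/- For every n ≥ 2 there exists a monic polynomial f ∈ Z[T] of degree equal to deg φ_n, dividing u_{n−1}(T), such that φ_n(T²) = f*(T) = T^{deg f} f(T + 1/T). -/
open Polynomial

/-- The symmetrization `q*(T) = T^(deg q) * q(T + T⁻¹)` of an integer polynomial,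
written as an integer polynomial: `q*(T) = Σ aᵢ T^(d-i) (T²+1)^i`. -/
noncomputable def symmStar (q : Polynomial ℤ) : Polynomial ℤ :=
  ∑ i ∈ Finset.range (q.natDegree + 1),
    Polynomial.C (q.coeff i) * Polynomial.X ^ (q.natDegree - i) *
      (Polynomial.X ^ 2 + 1) ^ i

lemma cheb_spec : ∀ m : ℕ, (cheb m).Monic ∧ (cheb m).natDegree = m
  | 0 => ⟨monic_one, natDegree_one⟩
  | 1 => ⟨monic_X, natDegree_X⟩
  | (m + 2) => by
    obtain ⟨h1m, h1d⟩ := cheb_spec (m + 1)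
    obtain ⟨h0m, h0d⟩ := cheb_spec m
    have hXm : (X * cheb (m + 1)).Monic := monic_X.mul h1m
    have hXd : (X * cheb (m + 1)).natDegree = m + 2 := by
      rw [natDegree_mul X_ne_zero h1m.ne_zero, natDegree_X, h1d]; omega
    have hlt : (cheb m).natDegree < (X * cheb (m + 1)).natDegree := by omega
    refine ⟨hXm.sub_of_left (degree_lt_degree hlt), ?_⟩
    show (X * cheb (m+1) - cheb m).natDegree = m + 2
    rw [natDegree_sub_eq_left_of_natDegree_lt hlt, hXd]

lemma cheb_monic (m : ℕ) : (cheb m).Monic := (cheb_spec m).1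
lemma cheb_natDegree (m : ℕ) : (cheb m).natDegree = m := (cheb_spec m).2

lemma X21_monic : ((X : Polynomial ℤ) ^ 2 + 1).Monic := by
  simpa using monic_X_pow_add_C (a := (1:ℤ)) (n := 2) two_ne_zero

lemma X21_natDegree : ((X : Polynomial ℤ) ^ 2 + 1).natDegree = 2 := by
  simpa using natDegree_X_pow_add_C (n := 2) (r := (1:ℤ))

lemma X21_pow_natDegree (i : ℕ) : (((X : Polynomial ℤ) ^ 2 + 1) ^ i).natDegree = 2 * i := by
  rw [X21_monic.natDegree_pow, X21_natDegree, Nat.mul_comm]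

lemma term_natDegree_le (a : ℤ) (d i : ℕ) (hi : i ≤ d) :
    (C a * X ^ (d - i) * ((X : Polynomial ℤ) ^ 2 + 1) ^ i).natDegree ≤ d + i := by
  refine (natDegree_mul_le).trans ?_
  have h1 : (C a * X ^ (d - i) : Polynomial ℤ).natDegree ≤ d - i :=
    (natDegree_mul_le).trans (by simp)
  have := X21_pow_natDegree i
  omega

lemma symmStar_coeff_top (f : Polynomial ℤ) :
    (symmStar f).coeff (2 * f.natDegree) = f.leadingCoeff := by
  set d := f.natDegree with hd
  rw [symmStar, finset_sum_coeff, Finset.sum_eq_single d]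
  · have hm : (((X : Polynomial ℤ) ^ 2 + 1) ^ d).Monic := X21_monic.pow d
    have : (((X : Polynomial ℤ) ^ 2 + 1) ^ d).coeff (2 * d) = 1 := by
      have := hm.coeff_natDegree
      rwa [X21_pow_natDegree] at this
    rw [mul_assoc, coeff_C_mul]
    simp only [Nat.sub_self, pow_zero, one_mul, this, mul_one, leadingCoeff, hd]; rw [← hd, this, mul_one]
  · intro i hi hne
    have hile : i ≤ d := by simpa [Nat.lt_succ_iff] using hi
    refine coeff_eq_zero_of_natDegree_lt ?_
    have := term_natDegree_le (f.coeff i) d i hile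
    have : d + i < 2 * d ∨ i = d := by omega
    rcases this with h | h
    · exact lt_of_le_of_lt (term_natDegree_le _ _ _ hile) h
    · exact absurd h hne
  · intro h; simp [hd] at h

lemma symmStar_natDegree_le (f : Polynomial ℤ) :
    (symmStar f).natDegree ≤ 2 * f.natDegree := by
  refine natDegree_sum_le_of_forall_le _ _ fun i hi => ?_
  have hile : i ≤ f.natDegree := by simpa [Nat.lt_succ_iff] using hi
  exact (term_natDegree_le _ _ _ hile).trans (by omega)

lemma symmStar_ne_zero {f : Polynomial ℤ} (hf : f ≠ 0) : symmStar f ≠ 0 := fun h => by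
  have h2 := symmStar_coeff_top f
  rw [h, coeff_zero] at h2
  exact leadingCoeff_ne_zero.mpr hf h2.symm

lemma symmStar_natDegree {f : Polynomial ℤ} (hf : f ≠ 0) :
    (symmStar f).natDegree = 2 * f.natDegree := by
  refine le_antisymm (symmStar_natDegree_le f) (le_natDegree_of_ne_zero ?_)
  rw [symmStar_coeff_top]
  exact leadingCoeff_ne_zero.mpr hf

lemma symmStar_leadingCoeff {f : Polynomial ℤ} (hf : f ≠ 0) :
    (symmStar f).leadingCoeff = f.leadingCoeff := by
  rw [leadingCoeff, symmStar_natDegree hf, symmStar_coeff_top]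

lemma symmStar_monic {f : Polynomial ℤ} (hf : f.Monic) : (symmStar f).Monic := by
  rw [Monic, symmStar_leadingCoeff hf.ne_zero]; exact hf

noncomputable def φmap : Polynomial ℤ →+* RatFunc ℚ :=
  (algebraMap (Polynomial ℚ) (RatFunc ℚ)).comp (mapRingHom (Int.castRingHom ℚ))

lemma φmap_injective : Function.Injective φmap :=
  (IsFractionRing.injective (Polynomial ℚ) (RatFunc ℚ)).comp
    (map_injective _ Int.cast_injective)

noncomputable def xx : RatFunc ℚ := φmap X

lemma xx_ne_zero : xx ≠ 0 := by
  have : φmap X ≠ φmap 0 := fun h => X_ne_zero (φmap_injective h)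
  simpa [xx] using this

noncomputable def yy : RatFunc ℚ := xx + xx⁻¹

lemma x_mul_y : xx * yy = xx ^ 2 + 1 := by
  rw [yy, mul_add, mul_inv_cancel₀ xx_ne_zero, sq]


noncomputable def ev (f : Polynomial ℤ) : RatFunc ℚ :=
  Polynomial.eval₂ (Int.castRingHom (RatFunc ℚ)) yy f

lemma φ_symmStar (f : Polynomial ℤ) :
    φmap (symmStar f) = xx ^ f.natDegree * ev f := by
  rw [symmStar, map_sum, ev, eval₂_eq_sum_range, Finset.mul_sum]
  refine Finset.sum_congr rfl fun i hi => ?_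
  have hile : i ≤ f.natDegree := Nat.lt_succ_iff.mp (Finset.mem_range.mp hi)
  have hC : φmap (C (f.coeff i)) = (Int.castRingHom (RatFunc ℚ)) (f.coeff i) :=
    RingHom.congr_fun (RingHom.ext_int (φmap.comp Polynomial.C) (Int.castRingHom _)) (f.coeff i)
  rw [map_mul, map_mul, map_pow, map_pow, map_add, map_pow, map_one, hC]
  show _ * xx ^ (f.natDegree - i) * (xx ^ 2 + 1) ^ i = _
  have hxp : xx ^ (f.natDegree - i) * xx ^ i = xx ^ f.natDegree := by
    rw [← pow_add, Nat.sub_add_cancel hile]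
  rw [← x_mul_y, mul_pow, ← hxp]
  ring


lemma ev_ne_zero {f : Polynomial ℤ} (hf : f ≠ 0) : ev f ≠ 0 := by
  intro h
  have h2 : φmap (symmStar f) = 0 := by rw [φ_symmStar, h, mul_zero]
  have h3 : symmStar f = 0 := φmap_injective (by simpa using h2)
  exact symmStar_ne_zero hf h3

lemma symmStar_mul {f g : Polynomial ℤ} (hf : f ≠ 0) (hg : g ≠ 0) :
    symmStar (f * g) = symmStar f * symmStar g := by
  apply φmap_injective
  rw [map_mul, φ_symmStar, φ_symmStar, φ_symmStar, natDegree_mul hf hg, ev, eval₂_mul]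
  rw [pow_add]
  show _ = xx ^ f.natDegree * (ev f) * (xx ^ g.natDegree * ev g)
  rw [ev, ev]; ring

lemma symmStar_inj {f g : Polynomial ℤ} (hdeg : f.natDegree = g.natDegree)
    (h : symmStar f = symmStar g) : f = g := by
  by_contra hne
  have hsub : f - g ≠ 0 := sub_ne_zero.mpr hne
  have hev : ev (f - g) = 0 := by
    have e1 : φmap (symmStar f) = φmap (symmStar g) := by rw [h]
    rw [φ_symmStar, φ_symmStar, hdeg] at e1
    have e2 : ev f = ev g := by
      have hx : xx ^ g.natDegree ≠ 0 := pow_ne_zero _ xx_ne_zero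
      exact mul_left_cancel₀ hx e1
    rw [ev, eval₂_sub, ← ev, ← ev, e2, sub_self]
  exact ev_ne_zero hsub hev

lemma ev_cheb (m : ℕ) :
    xx ^ m * ev (cheb m) = ∑ k ∈ Finset.range (m + 1), xx ^ (2 * k) := by
  induction m using Nat.strong_induction_on with
  | _ m ih =>
    match m with
    | 0 => simp [cheb, ev]
    | 1 =>
      show xx ^ 1 * ev X = _
      rw [ev, eval₂_X, yy]
      rw [Finset.sum_range_succ, Finset.sum_range_one]
      rw [pow_one, mul_add, mul_inv_cancel₀ xx_ne_zero]
      ring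
    | (m + 2) =>
      have ih1 := ih (m + 1) (by omega)
      have ih0 := ih m (by omega)
      show xx ^ (m+2) * ev (X * cheb (m + 1) - cheb m) = _
      have hev : ev (X * cheb (m + 1) - cheb m) = yy * ev (cheb (m+1)) - ev (cheb m) := by
        rw [ev, eval₂_sub, eval₂_mul, eval₂_X]; rfl
      rw [hev]
      have hxy : xx * yy = xx ^ 2 + 1 := x_mul_y
      have key : xx ^ (m+2) * (yy * ev (cheb (m+1)) - ev (cheb m))
          = (xx ^ 2 + 1) * (xx ^ (m+1) * ev (cheb (m+1))) - xx ^ 2 * (xx ^ m * ev (cheb m)) := by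
        rw [← hxy]; ring
      rw [key, ih1, ih0]
      have hne : xx ^ 2 - 1 ≠ 0 := by
        intro h
        have h2 : φmap (X ^ 2 - 1) = 0 := by rw [map_sub, map_pow, map_one]; exact h
        have h3 : (X ^ 2 - 1 : Polynomial ℤ) = 0 := φmap_injective (by simpa using h2)
        have := congr_arg (fun p => Polynomial.coeff p 2) h3
        simp [coeff_one] at this
      have hS : ∀ t : ℕ, (xx ^ 2 - 1) * ∑ k ∈ Finset.range t, xx ^ (2 * k)
          = (xx ^ 2) ^ t - 1 := by
        intro t
        have hg := geom_sum_mul (xx ^ 2) t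
        have he : (∑ k ∈ Finset.range t, xx ^ (2 * k))
            = ∑ k ∈ Finset.range t, (xx ^ 2) ^ k :=
          Finset.sum_congr rfl fun k _ => by rw [← pow_mul]
        rw [he, mul_comm, hg]
      apply mul_left_cancel₀ hne
      rw [mul_sub, ← mul_assoc (xx ^ 2 - 1) (xx ^ 2 + 1), mul_comm (xx ^ 2 - 1) (xx ^ 2 + 1),
        mul_assoc, hS, ← mul_assoc (xx ^ 2 - 1) (xx ^ 2), mul_comm (xx ^ 2 - 1) (xx ^ 2),
        mul_assoc, hS, hS]
      ring

lemma symmStar_cheb (m : ℕ) :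
    symmStar (cheb m) = ∑ k ∈ Finset.range (m + 1), (X : Polynomial ℤ) ^ (2 * k) := by
  apply φmap_injective
  rw [φ_symmStar, cheb_natDegree, ev_cheb, map_sum]
  exact Finset.sum_congr rfl fun k _ => by rw [map_pow]; rfl

lemma reflect_sum (N : ℕ) (s : Finset ℕ) (g : ℕ → Polynomial ℤ) :
    reflect N (∑ i ∈ s, g i) = ∑ i ∈ s, reflect N (g i) := by
  induction s using Finset.induction_on with
  | empty => simp [reflect_zero]
  | insert _ _ h ih => rw [Finset.sum_insert h, Finset.sum_insert h, reflect_add, ih]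

lemma reflect_X21 : reflect 2 ((X : Polynomial ℤ) ^ 2 + 1) = (X : Polynomial ℤ) ^ 2 + 1 := by
  have h1 : (1 : Polynomial ℤ) = X ^ 0 := by rw [pow_zero]
  rw [reflect_add, h1, reflect_monomial, reflect_monomial]
  rw [revAt_le (by norm_num), revAt_le (by norm_num)]
  simp [add_comm]

lemma reflect_X21_pow (i : ℕ) :
    reflect (2 * i) (((X : Polynomial ℤ) ^ 2 + 1) ^ i) = ((X : Polynomial ℤ) ^ 2 + 1) ^ i := by
  induction i with
  | zero => simp [reflect_monomial]
  | succ i ih =>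
    have h : (2 * (i + 1)) = 2 * i + 2 := by ring
    rw [h, pow_succ,
      reflect_mul _ _ (F := 2 * i) (G := 2) (by rw [X21_pow_natDegree]) (by rw [X21_natDegree]),
      ih, reflect_X21]

lemma reflect_symmStar (f : Polynomial ℤ) :
    reflect (2 * f.natDegree) (symmStar f) = symmStar f := by
  set d := f.natDegree
  rw [symmStar, reflect_sum]
  refine Finset.sum_congr rfl fun i hi => ?_
  have hile : i ≤ d := Nat.lt_succ_iff.mp (Finset.mem_range.mp hi)
  rw [mul_assoc, reflect_C_mul]
  have hF : (X ^ (d - i) : Polynomial ℤ).natDegree ≤ 2 * d - 2 * i := by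
    rw [natDegree_X_pow]; omega
  have hG : (((X : Polynomial ℤ) ^ 2 + 1) ^ i).natDegree ≤ 2 * i := by
    rw [X21_pow_natDegree]
  have hFG : 2 * d - 2 * i + 2 * i = 2 * d := by omega
  rw [← hFG, reflect_mul _ _ (F := 2 * d - 2 * i) (G := 2 * i) hF hG, reflect_X21_pow,
    reflect_monomial, revAt_le (by omega)]
  have h2 : 2 * d - 2 * i - (d - i) = d - i := by omega
  rw [h2, ← mul_assoc]

lemma coeff_symm_of_reflect {p : Polynomial ℤ} {N : ℕ} (h : reflect N p = p)
    {j : ℕ} (hj : j ≤ N) : p.coeff j = p.coeff (N - j) := by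
  conv_lhs => rw [← h]
  rw [coeff_reflect, revAt_le hj]

lemma cyclotomic_reverse_rat {n : ℕ} (hn : 2 ≤ n) :
    (cyclotomic n ℚ).reverse = cyclotomic n ℚ := by
  have hn0 : n ≠ 0 := by omega
  have hnpos : 0 < n := by omega
  set μ := Complex.exp (2 * Real.pi * Complex.I / n) with hμdef
  have hμ : IsPrimitiveRoot μ n := Complex.isPrimitiveRoot_exp n hn0
  have hμ0 : μ ≠ 0 := hμ.ne_zero hn0
  letI : Invertible μ := invertibleOfNonzero hμ0
  have hq : cyclotomic n ℚ = minpoly ℚ μ := cyclotomic_eq_minpoly_rat hμ hnpos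
  have hqinv : cyclotomic n ℚ = minpoly ℚ μ⁻¹ := cyclotomic_eq_minpoly_rat hμ.inv hnpos
  have hroot : Polynomial.aeval μ (cyclotomic n ℚ) = 0 := by
    rw [hq]; exact minpoly.aeval ℚ μ
  have hrev : Polynomial.aeval μ⁻¹ ((cyclotomic n ℚ).reverse) = 0 := by
    have := (eval₂_reverse_eq_zero_iff (algebraMap ℚ ℂ) μ (cyclotomic n ℚ)).mpr hroot
    rwa [invOf_eq_inv] at this
  have hdvd : cyclotomic n ℚ ∣ (cyclotomic n ℚ).reverse := by
    have h := minpoly.dvd ℚ μ⁻¹ hrev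
    rwa [← hqinv] at h
  obtain ⟨t, ht⟩ := hdvd
  have hq0 : cyclotomic n ℚ ≠ 0 := cyclotomic_ne_zero n ℚ
  have hrev0 : (cyclotomic n ℚ).reverse ≠ 0 := by
    rw [Ne, reverse_eq_zero]; exact hq0
  have ht0 : t ≠ 0 := fun h => hrev0 (by rw [ht, h, mul_zero])
  have htdeg : t.natDegree = 0 := by
    have h1 := reverse_natDegree_le (cyclotomic n ℚ)
    rw [ht, natDegree_mul hq0 ht0] at h1
    omega
  have htC : t = C (t.coeff 0) := eq_C_of_natDegree_le_zero (le_of_eq htdeg)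
  have hc0 : ((cyclotomic n ℚ).reverse).coeff 0 = 1 := by
    rw [coeff_reverse, revAt_le (Nat.zero_le _), Nat.sub_zero]
    exact (cyclotomic.monic n ℚ).coeff_natDegree
  have hc1 : ((cyclotomic n ℚ) * t).coeff 0 = t.coeff 0 := by
    conv_lhs => rw [htC]
    rw [coeff_mul_C, cyclotomic_coeff_zero ℚ (by omega), one_mul]
  have : t.coeff 0 = 1 := by rw [← hc1, ← ht, hc0]
  rw [ht, htC, this, map_one, mul_one]

lemma cyclotomic_reflect_int {n : ℕ} (hn : 2 ≤ n) :
    reflect (cyclotomic n ℤ).natDegree (cyclotomic n ℤ) = cyclotomic n ℤ := by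
  apply map_injective (Int.castRingHom ℚ) Int.cast_injective
  rw [← reflect_map, map_cyclotomic]
  have hdeg : (cyclotomic n ℤ).natDegree = (cyclotomic n ℚ).natDegree := by
    rw [natDegree_cyclotomic, natDegree_cyclotomic]
  rw [hdeg]
  exact cyclotomic_reverse_rat hn

noncomputable def sd (d : ℕ) (q : Polynomial ℤ) : Polynomial ℤ :=
  ∑ i ∈ Finset.range (d + 1),
    Polynomial.C (q.coeff i) * Polynomial.X ^ (d - i) * (Polynomial.X ^ 2 + 1) ^ i

lemma symmStar_eq_sd (q : Polynomial ℤ) : symmStar q = sd q.natDegree q := rfl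

lemma lift_palindrome : ∀ d : ℕ, ∀ P : Polynomial ℤ, P.natDegree ≤ 2 * d →
    (∀ j, j ≤ 2 * d → P.coeff j = P.coeff (2 * d - j)) →
    ∃ f : Polynomial ℤ, f.natDegree ≤ d ∧ f.coeff d = P.coeff (2 * d) ∧ sd d f = P := by
  intro d
  induction d with
  | zero =>
    intro P hdeg _
    refine ⟨P, by simpa using hdeg, by simp, ?_⟩
    have hP : P = C (P.coeff 0) := eq_C_of_natDegree_le_zero (by simpa using hdeg)
    rw [sd, Finset.sum_range_one]
    simp [← hP]
  | succ d ih =>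
    intro P hdeg hsym
    set c := P.coeff (2 * (d + 1)) with hc
    set B := ((X : Polynomial ℤ) ^ 2 + 1) ^ (d + 1) with hBdef
    have hBdeg : B.natDegree = 2 * (d + 1) := X21_pow_natDegree (d + 1)
    have hBtop : B.coeff (2 * (d + 1)) = 1 := by
      have h := (X21_monic.pow (d + 1)).coeff_natDegree
      rwa [X21_pow_natDegree] at h
    have hB0 : B.coeff 0 = 1 := by
      rw [coeff_zero_eq_eval_zero, hBdef]; simp
    have hBsym : ∀ j, j ≤ 2 * (d + 1) → B.coeff j = B.coeff (2 * (d + 1) - j) :=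
      fun j hj => coeff_symm_of_reflect (reflect_X21_pow (d + 1)) hj
    set P₁ := P - C c * B with hP₁def
    have hP₁top : P₁.coeff (2 * (d + 1)) = 0 := by
      rw [hP₁def, coeff_sub, coeff_C_mul, hBtop, mul_one, ← hc, sub_self]
    have hP₁zero : P₁.coeff 0 = 0 := by
      have h0 : P.coeff 0 = c := by
        have := hsym 0 (by omega)
        simpa using this
      rw [hP₁def, coeff_sub, coeff_C_mul, hB0, mul_one, h0, sub_self]
    have hP₁deg : P₁.natDegree ≤ 2 * d + 1 := by
      rw [natDegree_le_iff_coeff_eq_zero]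
      intro N hN
      rcases Nat.lt_or_ge (2 * (d + 1)) N with h | h
      · rw [hP₁def, coeff_sub]
        rw [coeff_eq_zero_of_natDegree_lt (lt_of_le_of_lt hdeg h),
          coeff_eq_zero_of_natDegree_lt (lt_of_le_of_lt (natDegree_mul_le.trans (by simp [hBdeg])) h),
          sub_self]
      · have : N = 2 * (d + 1) := by omega
        rw [this]; exact hP₁top
    have hP₁sym : ∀ j, j ≤ 2 * (d + 1) → P₁.coeff j = P₁.coeff (2 * (d + 1) - j) := by
      intro j hj
      rw [hP₁def, coeff_sub, coeff_sub, coeff_C_mul, coeff_C_mul, hsym j hj, hBsym j hj]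
    set Q := P₁.divX with hQdef
    have hQ : X * Q = P₁ := by
      have h := X_mul_divX_add P₁
      rwa [hP₁zero, map_zero, add_zero] at h
    have hQdeg : Q.natDegree ≤ 2 * d := by
      rw [natDegree_le_iff_coeff_eq_zero]
      intro N hN
      rw [hQdef, coeff_divX]
      exact natDegree_le_iff_coeff_eq_zero.mp hP₁deg (N + 1) (by omega)
    have hQsym : ∀ j, j ≤ 2 * d → Q.coeff j = Q.coeff (2 * d - j) := by
      intro j hj
      rw [hQdef, coeff_divX, coeff_divX]
      have h1 := hP₁sym (j + 1) (by omega)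
      have h2 : 2 * (d + 1) - (j + 1) = 2 * d - j + 1 := by omega
      rwa [h2] at h1
    obtain ⟨g, hgdeg, hgtop, hgsd⟩ := ih Q hQdeg hQsym
    refine ⟨C c * X ^ (d + 1) + g, ?_, ?_, ?_⟩
    · refine natDegree_add_le_of_degree_le ?_ (hgdeg.trans (by omega))
      exact natDegree_mul_le.trans (by simp)
    · rw [coeff_add, coeff_C_mul, coeff_X_pow, if_pos rfl, mul_one,
        coeff_eq_zero_of_natDegree_lt (lt_of_le_of_lt hgdeg (by omega)), add_zero]
    · have hfcoeff : ∀ i, i ≤ d → (C c * X ^ (d + 1) + g).coeff i = g.coeff i := by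
        intro i hi
        rw [coeff_add, coeff_C_mul, coeff_X_pow, if_neg (by omega), mul_zero, zero_add]
      rw [sd, Finset.sum_range_succ]
      have hlast : C ((C c * X ^ (d + 1) + g).coeff (d + 1)) * X ^ (d + 1 - (d + 1)) *
          ((X : Polynomial ℤ) ^ 2 + 1) ^ (d + 1) = C c * B := by
        have : (C c * X ^ (d + 1) + g).coeff (d + 1) = c := by
          rw [coeff_add, coeff_C_mul, coeff_X_pow, if_pos rfl, mul_one,
            coeff_eq_zero_of_natDegree_lt (lt_of_le_of_lt hgdeg (by omega)), add_zero]
        rw [this, Nat.sub_self, pow_zero, mul_one, hBdef]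
      have hfront : (∑ i ∈ Finset.range (d + 1),
          C ((C c * X ^ (d + 1) + g).coeff i) * X ^ (d + 1 - i) *
            ((X : Polynomial ℤ) ^ 2 + 1) ^ i) = X * sd d g := by
        rw [sd, Finset.mul_sum]
        refine Finset.sum_congr rfl fun i hi => ?_
        have hile : i ≤ d := Nat.lt_succ_iff.mp (Finset.mem_range.mp hi)
        rw [hfcoeff i hile]
        have : (X : Polynomial ℤ) ^ (d + 1 - i) = X * X ^ (d - i) := by
          rw [← pow_succ']
          congr 1
          omega
        rw [this]
        ring
      rw [hlast, hfront, hgsd, hQ, hP₁def]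
      ring

/-- For each `n ≥ 2` there is a monic irreducible-degree factor `f` of `u_{n-1}` with
`deg f = deg φₙ` and `φₙ(T²) = f*(T)`. -/
theorem stmt17 (n : ℕ) (hn : 2 ≤ n) :
    ∃ f : Polynomial ℤ, f.Monic ∧
      f.natDegree = (Polynomial.cyclotomic n ℤ).natDegree ∧
      f ∣ cheb (n - 1) ∧
      (Polynomial.cyclotomic n ℤ).comp (Polynomial.X ^ 2) = symmStar f := by
  set q := cyclotomic n ℤ with hqdef
  set d := q.natDegree with hddef
  have hqmonic : q.Monic := cyclotomic.monic n ℤ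
  have hq0 : q ≠ 0 := hqmonic.ne_zero
  have hdtot : d = Nat.totient n := natDegree_cyclotomic n ℤ
  have hd1 : 1 ≤ d := by
    rw [hdtot]
    exact Nat.totient_pos.mpr (by omega)
  have hdlt : d ≤ n - 1 := by
    have := Nat.totient_lt n (by omega)
    omega
  set P := q.comp (X ^ 2) with hPdef
  have hX2deg : ((X : Polynomial ℤ) ^ 2).natDegree = 2 := natDegree_X_pow 2
  have hPmonic : P.Monic := hqmonic.comp (monic_X_pow 2) (by rw [hX2deg]; omega)
  have hPdeg : P.natDegree = 2 * d := by
    rw [hPdef, natDegree_comp, hX2deg, ← hddef]; ring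
  have hPsum : P = ∑ i ∈ Finset.range (d + 1), C (q.coeff i) * X ^ (2 * i) := by
    conv_lhs => rw [hPdef, as_sum_range_C_mul_X_pow q]
    rw [sum_comp]
    refine Finset.sum_congr rfl fun i hi => ?_
    rw [mul_comp, C_comp, X_pow_comp, ← pow_mul]
  have hqsym : ∀ j, j ≤ d → q.coeff j = q.coeff (d - j) :=
    fun j hj => coeff_symm_of_reflect (cyclotomic_reflect_int hn) hj
  have hPreflect : reflect (2 * d) P = P := by
    conv_lhs => rw [hPsum]
    rw [reflect_sum]
    have step1 : (∑ i ∈ Finset.range (d + 1), reflect (2 * d) (C (q.coeff i) * X ^ (2 * i)))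
        = ∑ i ∈ Finset.range (d + 1), C (q.coeff i) * X ^ (2 * d - 2 * i) := by
      refine Finset.sum_congr rfl fun i hi => ?_
      have hile : i ≤ d := Nat.lt_succ_iff.mp (Finset.mem_range.mp hi)
      rw [reflect_C_mul_X_pow, revAt_le (by omega)]
    rw [step1]
    have step2 := Finset.sum_range_reflect
      (fun j => C (q.coeff j) * (X : Polynomial ℤ) ^ (2 * d - 2 * j)) (d + 1)
    simp only [Nat.add_sub_cancel] at step2
    rw [← step2]
    conv_rhs => rw [hPsum]
    refine Finset.sum_congr rfl fun i hi => ?_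
    have hile : i ≤ d := Nat.lt_succ_iff.mp (Finset.mem_range.mp hi)
    have h1 : 2 * d - 2 * (d - i) = 2 * i := by omega
    rw [h1, ← hqsym i hile]
  have hPsym : ∀ j, j ≤ 2 * d → P.coeff j = P.coeff (2 * d - j) :=
    fun j hj => coeff_symm_of_reflect hPreflect hj
  -- divisibility
  obtain ⟨t, ht⟩ : q ∣ ∑ i ∈ Finset.range n, (X : Polynomial ℤ) ^ i :=
    cyclotomic_dvd_geom_sum_of_dvd ℤ dvd_rfl (by omega)
  have hScomp : (∑ i ∈ Finset.range n, (X : Polynomial ℤ) ^ i).comp (X ^ 2)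
      = ∑ k ∈ Finset.range n, (X : Polynomial ℤ) ^ (2 * k) := by
    rw [sum_comp]
    refine Finset.sum_congr rfl fun i hi => ?_
    rw [X_pow_comp, ← pow_mul]
  have hdvdS : P ∣ symmStar (cheb (n - 1)) := by
    rw [symmStar_cheb]
    have hn1 : n - 1 + 1 = n := by omega
    rw [hn1, ← hScomp, ht, mul_comp]
    exact Dvd.intro _ rfl
  obtain ⟨T, hT⟩ := hdvdS
  have hcheb0 : cheb (n - 1) ≠ 0 := (cheb_monic (n - 1)).ne_zero
  have hSmonic : (symmStar (cheb (n - 1))).Monic := symmStar_monic (cheb_monic (n - 1))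
  have hSdeg : (symmStar (cheb (n - 1))).natDegree = 2 * (n - 1) := by
    rw [symmStar_natDegree hcheb0, cheb_natDegree]
  have hP0 : P ≠ 0 := hPmonic.ne_zero
  have hT0 : T ≠ 0 := by
    intro h
    rw [h, mul_zero] at hT
    exact hSmonic.ne_zero hT
  have hTmonic : T.Monic := by
    have h := congr_arg leadingCoeff hT
    rw [hSmonic.leadingCoeff, leadingCoeff_mul, hPmonic.leadingCoeff, one_mul] at h
    exact h.symm
  have hTdeg : T.natDegree = 2 * (n - 1 - d) := by
    have h := congr_arg natDegree hT
    rw [hSdeg, natDegree_mul hP0 hT0, hPdeg] at h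
    omega
  have hTreflect : reflect (2 * (n - 1 - d)) T = T := by
    have h := reflect_symmStar (cheb (n - 1))
    rw [cheb_natDegree, hT] at h
    rw [show 2 * (n - 1) = 2 * d + 2 * (n - 1 - d) by omega] at h
    rw [reflect_mul _ _ (F := 2 * d) (G := 2 * (n - 1 - d)) hPdeg.le hTdeg.le,
      hPreflect] at h
    exact mul_left_cancel₀ hP0 h
  have hTsym : ∀ j, j ≤ 2 * (n - 1 - d) → T.coeff j = T.coeff (2 * (n - 1 - d) - j) :=
    fun j hj => coeff_symm_of_reflect hTreflect hj
  -- lift both factors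
  obtain ⟨f, hfdeg, hftop, hfsd⟩ := lift_palindrome d P hPdeg.le hPsym
  have hftop1 : f.coeff d = 1 := by
    rw [hftop, ← hPdeg]
    exact hPmonic.coeff_natDegree
  have hfdeg' : f.natDegree = d :=
    le_antisymm hfdeg (le_natDegree_of_ne_zero (by rw [hftop1]; exact one_ne_zero))
  have hfmonic : f.Monic := by
    rw [Monic, leadingCoeff, hfdeg', hftop1]
  have hf0 : f ≠ 0 := hfmonic.ne_zero
  have hsymf : symmStar f = P := by
    rw [symmStar_eq_sd, hfdeg']; exact hfsd
  obtain ⟨g, hgdeg, hgtop, hgsd⟩ := lift_palindrome (n - 1 - d) T hTdeg.le hTsym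
  have hgtop1 : g.coeff (n - 1 - d) = 1 := by
    rw [hgtop, ← hTdeg]
    exact hTmonic.coeff_natDegree
  have hgdeg' : g.natDegree = n - 1 - d :=
    le_antisymm hgdeg (le_natDegree_of_ne_zero (by rw [hgtop1]; exact one_ne_zero))
  have hg0 : g ≠ 0 := fun h => by
    rw [h, coeff_zero] at hgtop1
    exact one_ne_zero hgtop1.symm
  have hsymg : symmStar g = T := by
    rw [symmStar_eq_sd, hgdeg']; exact hgsd
  have hfg : f * g = cheb (n - 1) := by
    apply symmStar_inj
    · rw [natDegree_mul hf0 hg0, hfdeg', hgdeg', cheb_natDegree]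
      omega
    · rw [symmStar_mul hf0 hg0, hsymf, hsymg, ← hT]
  exact ⟨f, hfmonic, by rw [hfdeg'], ⟨g, hfg.symm⟩, by rw [hsymf, hPdef]⟩
end

section
/- Kronecker's theorem: if p ∈ Z[T] is monic with p(0) ≠ 0 and all complex roots of p lie in the closed unit disk {z : |z| ≤ 1}, then every root of p is a root of unity. -/
open Polynomial

theorem multiset_prod_le_one (s : Multiset ℝ) (h : ∀ x ∈ s, 0 ≤ x ∧ x ≤ 1) :
    s.prod ≤ 1 := by
  induction s using Multiset.induction_on with
  | empty => simp
  | cons a t ih =>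
    rw [Multiset.prod_cons]
    have ha := h a (Multiset.mem_cons_self a t)
    have ht := ih fun x hx => h x (Multiset.mem_cons_of_mem hx)
    have htn : 0 ≤ t.prod := Multiset.prod_nonneg fun x hx => (h x (Multiset.mem_cons_of_mem hx)).1
    calc a * t.prod ≤ 1 * 1 := mul_le_mul ha.2 ht htn zero_le_one
      _ = 1 := one_mul 1

theorem abs_root_eq_one (p : Polynomial ℤ) (hmonic : p.Monic) (h0 : p.eval 0 ≠ 0)
    (hroots : ∀ z : ℂ, (p.map (Int.castRingHom ℂ)).IsRoot z → ‖z‖ ≤ 1) :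
    ∀ z : ℂ, (p.map (Int.castRingHom ℂ)).IsRoot z → ‖z‖ = 1 := by
  set q := p.map (Int.castRingHom ℂ) with hq
  have hqm : q.Monic := hmonic.map _
  have hq0 : q ≠ 0 := hqm.ne_zero
  have hsplit : q.Splits := IsAlgClosed.splits q
  have hprod : q = (q.roots.map fun a => X - C a).prod :=
    (hsplit.eq_prod_roots_of_monic hqm)
  have heval0 : q.eval 0 = ((p.eval 0 : ℤ) : ℂ) := by
    rw [hq, eval_map, eval₂_at_zero, coeff_zero_eq_eval_zero]; rfl
  have habs0 : 1 ≤ (NormedField.toAbsoluteValue ℂ) (q.eval 0) := by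
    rw [heval0]; show 1 ≤ ‖((eval 0 p : ℤ) : ℂ)‖; rw [Complex.norm_intCast]
    exact_mod_cast Int.one_le_abs h0
  have hroots_le : ∀ r ∈ q.roots, (NormedField.toAbsoluteValue ℂ) r ≤ 1 := fun r hr =>
    hroots r ((mem_roots hq0).mp hr)
  have hprodabs : (NormedField.toAbsoluteValue ℂ) (q.eval 0) = (q.roots.map (NormedField.toAbsoluteValue ℂ)).prod := by
    conv_lhs => rw [hprod]
    rw [eval_multiset_prod, map_multiset_prod, Multiset.map_map, Multiset.map_map]
    congr 1
    apply Multiset.map_congr rfl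
    intro r _
    simp
  intro z hz
  by_contra hne
  have hzmem : z ∈ q.roots := (mem_roots hq0).mpr hz
  have hzlt : (NormedField.toAbsoluteValue ℂ) z < 1 := lt_of_le_of_ne (hroots z hz) hne
  obtain ⟨rest, hrest⟩ := Multiset.exists_cons_of_mem hzmem
  have hrest_le : (rest.map (NormedField.toAbsoluteValue ℂ)).prod ≤ 1 :=
    multiset_prod_le_one _ (by
      intro x hx
      obtain ⟨r, hr, rfl⟩ := Multiset.mem_map.mp hx
      exact ⟨AbsoluteValue.nonneg _ r,
        hroots_le r (by rw [hrest]; exact Multiset.mem_cons_of_mem hr)⟩)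
  have : (NormedField.toAbsoluteValue ℂ) (q.eval 0) < 1 := by
    rw [hprodabs, hrest, Multiset.map_cons, Multiset.prod_cons]
    calc (NormedField.toAbsoluteValue ℂ) z * (rest.map (NormedField.toAbsoluteValue ℂ)).prod
        ≤ (NormedField.toAbsoluteValue ℂ) z * 1 :=
          mul_le_mul_of_nonneg_left hrest_le (AbsoluteValue.nonneg _ z)
      _ < 1 := by rw [mul_one]; exact hzlt
  linarith

/-- Kronecker's theorem: a monic integer polynomial with nonzero constant term and
all complex roots in the closed unit disk has only roots of unity as roots. -/
theorem stmt19 (p : Polynomial ℤ) (hmonic : p.Monic) (h0 : p.eval 0 ≠ 0)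
    (hroots : ∀ z : ℂ, (p.map (Int.castRingHom ℂ)).IsRoot z → ‖z‖ ≤ 1) :
    ∀ z : ℂ, (p.map (Int.castRingHom ℂ)).IsRoot z →
      ∃ k : ℕ, 0 < k ∧ z ^ k = 1 := by
  intro z hz
  have habs := abs_root_eq_one p hmonic h0 hroots
  have hint : IsIntegral ℤ z := by
    refine ⟨p, hmonic, ?_⟩
    rwa [IsRoot, eval_map] at hz
  have hintQ : IsIntegral ℚ z := hint.tower_top
  let K := IntermediateField.adjoin ℚ ({z} : Set ℂ)
  haveI : FiniteDimensional ℚ K := IntermediateField.adjoin.finiteDimensional hintQ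
  haveI : NumberField K := ⟨⟩
  let x : K := IntermediateField.AdjoinSimple.gen ℚ z
  have hzx : (algebraMap K ℂ) x = z := IntermediateField.AdjoinSimple.algebraMap_gen ℚ z
  have hxint : IsIntegral ℤ x := by
    rw [← isIntegral_algebraMap_iff (algebraMap K ℂ).injective, hzx]
    exact hint
  have hnorm : ∀ φ : K →+* ℂ, ‖φ x‖ = 1 := by
    intro φ
    have hmem : φ x ∈ (minpoly ℚ x).rootSet ℂ := by
      rw [← NumberField.Embeddings.range_eval_eq_rootSet_minpoly K ℂ x]
      exact ⟨φ, rfl⟩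
    have hminz : minpoly ℚ x = minpoly ℚ z := by
      rw [show x = IntermediateField.AdjoinSimple.gen ℚ z from rfl]
      exact IntermediateField.minpoly_gen ℚ z
    rw [hminz] at hmem
    have hdvd : minpoly ℚ z ∣ p.map (Int.castRingHom ℚ) := by
      apply minpoly.dvd
      rw [aeval_def, eval₂_map]
      rwa [IsRoot, eval_map] at hz
    have hroot : (p.map (Int.castRingHom ℂ)).IsRoot (φ x) := by
      have h1 : aeval (φ x) (minpoly ℚ z) = 0 := (mem_rootSet.mp hmem).2
      obtain ⟨c, hc⟩ := hdvd
      have : aeval (φ x) (p.map (Int.castRingHom ℚ)) = 0 := by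
        rw [hc, map_mul, h1, zero_mul]
      rw [IsRoot, eval_map]
      rw [aeval_def, eval₂_map] at this
      rwa [Subsingleton.elim ((algebraMap ℚ ℂ).comp (Int.castRingHom ℚ))
        (Int.castRingHom ℂ)] at this
    exact habs _ hroot
  obtain ⟨n, hn, hxn⟩ := NumberField.Embeddings.pow_eq_one_of_norm_eq_one K ℂ hxint hnorm
  refine ⟨n, hn, ?_⟩
  rw [← hzx, ← map_pow, hxn, map_one]
end
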